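/- The map ρ ↦ δ(ρ) = (1−√(1−ρ²))/(2ρ) (with δ(0)=0) is a strictly increasing bijection from [−1,1] to [−1/2, 1/2], and for ρ ∈ [−1,1] and δ = δ(ρ), one has ρ = 4δ/(1+4δ²). -/

import Mathlib

noncomputable def δf (ρ : ℝ) : ℝ :=
  if ρ = 0 then 0 else (1 - Real.sqrt (1 - ρ ^ 2)) / (2 * ρ)

lemma sqrt_facts {ρ : ℝ} (h : ρ ∈ Set.Icc (-1 : ℝ) 1) :
    (Real.sqrt (1 - ρ ^ 2)) ^ 2 = 1 - ρ ^ 2 ∧ 0 ≤ Real.sqrt (1 - ρ ^ 2) := by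
  obtain ⟨h1, h2⟩ := h
  constructor
  · exact Real.sq_sqrt (by nlinarith)
  · exact Real.sqrt_nonneg _

lemma δf_eq {ρ : ℝ} (h : ρ ∈ Set.Icc (-1 : ℝ) 1) :
    δf ρ = ρ / (2 * (1 + Real.sqrt (1 - ρ ^ 2))) := by
  obtain ⟨hs, hs0⟩ := sqrt_facts h
  set s := Real.sqrt (1 - ρ ^ 2) with hsdef
  by_cases hρ : ρ = 0
  · simp [δf, hρ]
  · have hden : (1 : ℝ) + s > 0 := by linarith
    rw [δf, if_neg hρ]
    field_simp
    nlinarith [hs]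

lemma δf_mem {ρ : ℝ} (h : ρ ∈ Set.Icc (-1 : ℝ) 1) :
    δf ρ ∈ Set.Icc (-(1 : ℝ) / 2) (1 / 2) := by
  obtain ⟨hs, hs0⟩ := sqrt_facts h
  obtain ⟨h1, h2⟩ := h
  rw [δf_eq ⟨h1, h2⟩]
  set s := Real.sqrt (1 - ρ ^ 2)
  have hden : (0 : ℝ) < 2 * (1 + s) := by linarith
  constructor
  · rw [div_le_div_iff₀ (by norm_num : (0:ℝ) < 2) hden]
    nlinarith
  · rw [div_le_iff₀ hden]
    nlinarith

lemma inv_rel {ρ : ℝ} (h : ρ ∈ Set.Icc (-1 : ℝ) 1) :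
    ρ = 4 * δf ρ / (1 + 4 * (δf ρ) ^ 2) := by
  obtain ⟨hs, hs0⟩ := sqrt_facts h
  rw [δf_eq h]
  set s := Real.sqrt (1 - ρ ^ 2)
  have hden : (0 : ℝ) < 2 * (1 + s) := by linarith
  have hne : (2 : ℝ) * (1 + s) ≠ 0 := ne_of_gt hden
  have hpos : (0 : ℝ) < 1 + 4 * (ρ / (2 * (1 + s))) ^ 2 := by positivity
  rw [eq_div_iff (ne_of_gt hpos)]
  field_simp
  linear_combination 4 * ρ * hs

lemma h_strict {x y : ℝ} (hx : x ∈ Set.Icc (-(1 : ℝ) / 2) (1 / 2))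
    (hy : y ∈ Set.Icc (-(1 : ℝ) / 2) (1 / 2)) (hxy : x < y) :
    4 * x / (1 + 4 * x ^ 2) < 4 * y / (1 + 4 * y ^ 2) := by
  obtain ⟨hx1, hx2⟩ := hx
  obtain ⟨hy1, hy2⟩ := hy
  have hdx : (0 : ℝ) < 1 + 4 * x ^ 2 := by positivity
  have hdy : (0 : ℝ) < 1 + 4 * y ^ 2 := by positivity
  have key : 4 * x * y < 1 := by
    nlinarith [mul_pos (sub_pos.mpr hxy) (sub_pos.mpr hxy), sq_nonneg (x + y),
      mul_nonneg (by linarith : (0:ℝ) ≤ 1/2 - x) (by linarith : (0:ℝ) ≤ 1/2 - y),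
      mul_nonneg (by linarith : (0:ℝ) ≤ x + 1/2) (by linarith : (0:ℝ) ≤ y + 1/2)]
  rw [div_lt_div_iff₀ hdx hdy]
  nlinarith [mul_pos (sub_pos.mpr hxy) (by linarith : (0:ℝ) < 1 - 4 * x * y)]

theorem stmt16 :
    StrictMonoOn δf (Set.Icc (-1 : ℝ) 1)
    ∧ Set.BijOn δf (Set.Icc (-1 : ℝ) 1) (Set.Icc (-(1 : ℝ) / 2) (1 / 2))
    ∧ ∀ ρ ∈ Set.Icc (-1 : ℝ) 1, ρ = 4 * δf ρ / (1 + 4 * (δf ρ) ^ 2) := by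
  have hmono : StrictMonoOn δf (Set.Icc (-1 : ℝ) 1) := by
    intro a ha b hb hab
    by_contra hle
    push_neg at hle
    rcases lt_or_eq_of_le hle with hlt | heq
    · have := h_strict (δf_mem hb) (δf_mem ha) hlt
      rw [← inv_rel hb, ← inv_rel ha] at this
      linarith
    · have : a = b := by rw [inv_rel ha, inv_rel hb, heq]
      linarith
  refine ⟨hmono, ⟨fun ρ h => δf_mem h, hmono.injOn, ?_⟩, fun ρ h => inv_rel h⟩
  intro δ hδ
  obtain ⟨hδ1, hδ2⟩ := hδ
  have hd : (0 : ℝ) < 1 + 4 * δ ^ 2 := by positivity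
  set ρ := 4 * δ / (1 + 4 * δ ^ 2) with hρdef
  have hρmem : ρ ∈ Set.Icc (-1 : ℝ) 1 := by
    constructor
    · rw [hρdef, le_div_iff₀ hd]; nlinarith
    · rw [hρdef, div_le_iff₀ hd]; nlinarith
  refine ⟨ρ, hρmem, ?_⟩
  -- h (δf ρ) = ρ = h δ and h injective on the interval
  have h1 : 4 * δf ρ / (1 + 4 * (δf ρ) ^ 2) = 4 * δ / (1 + 4 * δ ^ 2) := by
    rw [← inv_rel hρmem]
  have hm1 := δf_mem hρmem
  rcases lt_trichotomy (δf ρ) δ with h | h | h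
  · exact absurd h1 (ne_of_lt (h_strict hm1 ⟨hδ1, hδ2⟩ h))
  · exact h
  · exact absurd h1 (ne_of_gt (h_strict ⟨hδ1, hδ2⟩ hm1 h))
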